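/- arXiv:2008.04961 — 16 statements merged into one kernel-verified Lean document; each statement's English description precedes it below -/
import Mathlib

section
/- In any RLSE, x·(x⊕1) = 0 for all x; in particular 1⊕1 = 0. -/
structure RLSE (R : Type*) where
  oplus : R → R → R
  mul : R → R → R
  zero : R
  one : R
  mul_comm : ∀ x y, mul x y = mul y x
  mul_assoc : ∀ x y z, mul (mul x y) z = mul x (mul y z)
  mul_one : ∀ x, mul x one = x
  mul_idem : ∀ x, mul x x = x
  mul_zero : ∀ x, mul x zero = zero
  R1 : ∀ x y, oplus x y = oplus y x
  R2 : ∀ x y, oplus (mul (oplus (mul x y) one) (oplus x one)) one = x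
  R3 : ∀ x y, mul (oplus (mul (oplus (mul x y) one) x) one) x = mul x y
  R4 : ∀ x y, oplus (mul x y) (oplus x one) = oplus (mul (oplus (mul x y) one) x) one

theorem rlse_mul_compl_eq_zero {R : Type*} (A : RLSE R) :
    (∀ x : R, A.mul x (A.oplus x A.one) = A.zero) ∧
    A.oplus A.one A.one = A.zero := by
  -- involution: (x ⊕ 1) ⊕ 1 = x
  have tinv : ∀ x, A.oplus (A.oplus x A.one) A.one = x := by
    intro x
    have h := A.R2 x A.one
    rwa [A.mul_one, A.mul_idem] at h
  -- key: (xy ⊕ 1)·(x ⊕ 1) = x ⊕ 1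
  have key : ∀ x y, A.mul (A.oplus (A.mul x y) A.one) (A.oplus x A.one)
      = A.oplus x A.one := by
    intro x y
    have h := A.R2 x y
    calc A.mul (A.oplus (A.mul x y) A.one) (A.oplus x A.one)
        = A.oplus (A.oplus (A.mul (A.oplus (A.mul x y) A.one) (A.oplus x A.one)) A.one) A.one :=
          (tinv _).symm
      _ = A.oplus x A.one := by rw [h]
  -- z · (1 ⊕ 1) = 1 ⊕ 1 for all z
  have habs : ∀ z, A.mul z (A.oplus A.one A.one) = A.oplus A.one A.one := by
    intro z
    have h := key A.one (A.oplus z A.one)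
    rw [A.mul_comm A.one, A.mul_one, tinv] at h
    exact h
  -- 1 ⊕ 1 = 0
  have hs : A.oplus A.one A.one = A.zero := by
    have h := habs A.zero
    rw [A.mul_comm, A.mul_zero] at h
    exact h.symm
  -- 0 ⊕ 1 = 1
  have h01 : A.oplus A.zero A.one = A.one := by
    have h := tinv A.one
    rwa [hs] at h
  refine ⟨?_, hs⟩
  intro x
  have h := A.R3 x A.zero
  rw [A.mul_zero, h01, A.mul_comm A.one x, A.mul_one] at h
  rw [A.mul_comm]
  exact h
end

section
/- In any RLSE, x⊕0 = x for all x. -/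
theorem rlse_oplus_zero {R : Type*} (A : RLSE R) :
    ∀ x : R, A.oplus x A.zero = x := by
  intro x
  set e := A.oplus A.zero A.one with he
  -- R2 at (x, 0): e * (x ⊕ 1) ⊕ 1 = x
  have hR2 : ∀ z : R, A.oplus (A.mul e (A.oplus z A.one)) A.one = z := by
    intro z
    have := A.R2 z A.zero
    rwa [A.mul_zero] at this
  -- R4 at (x, 0): 0 ⊕ (x ⊕ 1) = e * x ⊕ 1
  have hR4 : ∀ z : R, A.oplus A.zero (A.oplus z A.one) = A.oplus (A.mul e z) A.one := by
    intro z
    have := A.R4 z A.zero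
    rwa [A.mul_zero] at this
  -- x = w ⊕ 1 with w = e * (x ⊕ 1)
  have hx : x = A.oplus (A.mul e (A.oplus x A.one)) A.one := (hR2 x).symm
  calc A.oplus x A.zero
      = A.oplus A.zero x := A.R1 x A.zero
    _ = A.oplus A.zero (A.oplus (A.mul e (A.oplus x A.one)) A.one) := by rw [← hx]
    _ = A.oplus (A.mul e (A.mul e (A.oplus x A.one))) A.one := hR4 _
    _ = A.oplus (A.mul e (A.oplus x A.one)) A.one := by
        rw [← A.mul_assoc, A.mul_idem]
    _ = x := hR2 x
end

section
/- In any RLSE, x⊕(x⊕1) = 1 for all x. -/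
theorem rlse_oplus_compl_eq_one {R : Type*} (A : RLSE R) :
    ∀ x : R, A.oplus x (A.oplus x A.one) = A.one := by
  -- (a) involution: (x⊕1)⊕1 = x
  have star : ∀ x, A.oplus (A.oplus x A.one) A.one = x := by
    intro x
    have h := A.R2 x A.one
    rwa [A.mul_one, A.mul_idem] at h
  -- (b) 0⊕1 = 1
  have e1 : A.oplus A.zero A.one = A.one := by
    have key : ∀ z, A.mul (A.oplus A.zero A.one) z = z := by
      intro z
      have h := A.R2 (A.oplus z A.one) A.zero
      rw [A.mul_zero, star] at h
      -- h : oplus (mul (oplus zero one) z) one = oplus z one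
      have := congrArg (fun a => A.oplus a A.one) h
      simpa [star] using this
    have := key A.one
    rw [A.mul_one] at this
    exact this
  -- (c) (x⊕1)·x = 0
  have c0 : ∀ x, A.mul (A.oplus x A.one) x = A.zero := by
    intro x
    have h := A.R3 x A.zero
    rw [A.mul_zero, e1] at h
    rw [A.mul_comm A.one x, A.mul_one] at h
    exact h
  -- conclude via R4 with y = 1
  intro x
  have h := A.R4 x A.one
  rw [A.mul_one] at h
  rw [h, c0, e1]
end

section
/- In any RLSE, for all x,y: x ≤ y if and only if y⊕1 ≤ x⊕1, where ≤ is the order induced by the idempotent commutative monoid (·), i.e., x ≤ y iff x·y = x. -/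
lemma rlse_compl_compl {R : Type*} (A : RLSE R) (x : R) :
    A.oplus (A.oplus x A.one) A.one = x := by
  have h := A.R2 x A.one
  rwa [A.mul_one, A.mul_idem] at h

lemma rlse_c2 {R : Type*} (A : RLSE R) (x y : R) :
    A.mul (A.oplus (A.mul x y) A.one) (A.oplus x A.one) = A.oplus x A.one := by
  have h := A.R2 x y
  have := congrArg (fun z => A.oplus z A.one) h
  rwa [rlse_compl_compl] at this

theorem rlse_compl_antitone_iff {R : Type*} (A : RLSE R) :
    ∀ x y : R, A.mul x y = x ↔ A.mul (A.oplus y A.one) (A.oplus x A.one) = A.oplus y A.one := by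
  have fwd : ∀ x y : R, A.mul x y = x →
      A.mul (A.oplus y A.one) (A.oplus x A.one) = A.oplus y A.one := by
    intro x y h
    have h2 := rlse_c2 A y x
    rw [A.mul_comm y x, h] at h2
    rw [A.mul_comm, h2]
  intro x y
  constructor
  · exact fwd x y
  · intro h
    have := fwd (A.oplus y A.one) (A.oplus x A.one) h
    rwa [rlse_compl_compl, rlse_compl_compl] at this
end

section
/- Let (R,⊕,·,0,1) be an RLSE. Define x' := x⊕1, x∧y := x·y, and x∨y := (x'·y')'. Then (R,∨,∧,',0,1) is an orthomodular lattice: a bounded lattice in which ' is an antitone involution with x∧x' = 0 and x∨x' = 1, satisfying the orthomodular law x ≤ y implies y = x ∨ (y ∧ x'). -/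
namespace RLSE

variable {R : Type*} (A : RLSE R)

/-- Orthocomplement: `x' = x ⊕ 1`. -/
def c (x : R) : R := A.oplus x A.one

lemma inv (x : R) : A.c (A.c x) = x := by
  have h := A.R2 x A.one
  rw [A.mul_one, A.mul_idem] at h
  exact h

/-- `(xy)'·x' = x'`, i.e. `x' ≤ (xy)'`. -/
lemma l1 (x y : R) : A.mul (A.c (A.mul x y)) (A.c x) = A.c x := by
  have h : A.c (A.mul (A.c (A.mul x y)) (A.c x)) = x := A.R2 x y
  have h2 := congrArg A.c h
  rw [A.inv] at h2
  exact h2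

/-- Antitonicity of the complement. -/
lemma anti {x y : R} (h : A.mul x y = x) : A.mul (A.c y) (A.c x) = A.c y := by
  have h1 := A.l1 y x
  rw [A.mul_comm y x, h] at h1
  rw [A.mul_comm]
  exact h1

lemma c_one : A.c A.one = A.zero := by
  have h := A.l1 A.one (A.c A.zero)
  rw [A.mul_comm A.one, A.mul_one, A.inv] at h
  rw [A.mul_comm, A.mul_zero] at h
  exact h.symm

lemma c_zero : A.c A.zero = A.one := by
  rw [← A.c_one, A.inv]

lemma compl_mul (x : R) : A.mul x (A.c x) = A.zero := by
  have h := A.R3 x A.zero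
  rw [A.mul_zero] at h
  have hz : A.oplus A.zero A.one = A.one := A.c_zero
  rw [hz, A.mul_comm A.one x, A.mul_one] at h
  rw [A.mul_comm]
  exact h

/-- If `a ≤ b` then `(a'·b)'·b = a`. -/
lemma l2 {a b : R} (h : A.mul a b = a) :
    A.mul (A.c (A.mul (A.c a) b)) b = a := by
  have h3 := A.R3 b a
  rw [A.mul_comm b a, h] at h3
  exact h3

lemma meet_le_left (x y : R) : A.mul (A.mul x y) x = A.mul x y := by
  rw [A.mul_comm, ← A.mul_assoc, A.mul_idem]

lemma meet_le_right (x y : R) : A.mul (A.mul x y) y = A.mul x y := by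
  rw [A.mul_assoc, A.mul_idem]

lemma meet_glb {x y z : R} (h1 : A.mul z x = z) (h2 : A.mul z y = z) :
    A.mul z (A.mul x y) = z := by
  rw [← A.mul_assoc, h1, h2]

end RLSE

/-- The induced structure `L(R)` of an RLSE is an orthomodular lattice, where
`x ≤ y ↔ x·y = x`, `x ∧ y = x·y`, `x' = x⊕1`, `x ∨ y = (x'·y')'`. -/
theorem rlse_induces_orthomodular_lattice {R : Type*} (A : RLSE R) :
    let le : R → R → Prop := fun x y => A.mul x y = x
    let compl : R → R := fun x => A.oplus x A.one
    let sup : R → R → R := fun x y => compl (A.mul (compl x) (compl y))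
    -- bounded lattice: 0 and 1 are bounds, mul is the infimum, sup is the supremum
    (∀ x, le A.zero x) ∧ (∀ x, le x A.one) ∧
    (∀ x y, le (A.mul x y) x) ∧ (∀ x y, le (A.mul x y) y) ∧
    (∀ x y z, le z x → le z y → le z (A.mul x y)) ∧
    (∀ x y, le x (sup x y)) ∧ (∀ x y, le y (sup x y)) ∧
    (∀ x y z, le x z → le y z → le (sup x y) z) ∧
    -- antitone involution
    (∀ x, compl (compl x) = x) ∧
    (∀ x y, le x y → le (compl y) (compl x)) ∧
    -- complementation
    (∀ x, A.mul x (compl x) = A.zero) ∧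
    (∀ x, sup x (compl x) = A.one) ∧
    -- orthomodular law
    (∀ x y, le x y → y = sup x (A.mul y (compl x))) := by
  intro le compl sup
  refine ⟨?_, ?_, ?_, ?_, ?_, ?_, ?_, ?_, ?_, ?_, ?_, ?_, ?_⟩
  · intro x
    show A.mul A.zero x = A.zero
    rw [A.mul_comm, A.mul_zero]
  · exact A.mul_one
  · exact A.meet_le_left
  · exact A.meet_le_right
  · intro x y z h1 h2
    exact A.meet_glb h1 h2
  · intro x y
    show A.mul x (A.c (A.mul (A.c x) (A.c y))) = x
    have h := A.anti (A.meet_le_left (A.c x) (A.c y))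
    rw [A.inv] at h
    exact h
  · intro x y
    show A.mul y (A.c (A.mul (A.c x) (A.c y))) = y
    have h := A.anti (A.meet_le_right (A.c x) (A.c y))
    rw [A.inv] at h
    exact h
  · intro x y z hx hy
    show A.mul (A.c (A.mul (A.c x) (A.c y))) z = A.c (A.mul (A.c x) (A.c y))
    have h := A.anti (A.meet_glb (A.anti hx) (A.anti hy))
    rw [A.inv] at h
    exact h
  · exact A.inv
  · intro x y h
    exact A.anti h
  · exact A.compl_mul
  · intro x
    show A.c (A.mul (A.c x) (A.c (A.c x))) = A.one
    rw [A.inv, A.mul_comm, A.compl_mul, A.c_zero]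
  · intro x y h
    show y = A.c (A.mul (A.c x) (A.c (A.mul y (A.c x))))
    have h2 := A.l2 (A.anti h)
    rw [A.inv] at h2
    rw [A.mul_comm (A.c x), h2, A.inv]
end

section
/- Let (R,⊕,·,0,1) be an RLSE with induced lattice operations x' := x⊕1, x∧y := x·y, x∨y := (x'y')'. Then for all x,y ∈ R with x ≤ y' (i.e., x·(y⊕1) = x), one has x⊕y = x∨y. -/
/-- If `x ≤ y'` (orthogonality) in an RLSE, then `x ⊕ y = x ∨ y`. -/
theorem rlse_oplus_eq_sup_of_orthogonal {R : Type*} (A : RLSE R) :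
    ∀ x y : R, A.mul x (A.oplus y A.one) = x →
      A.oplus x y =
        A.oplus (A.mul (A.oplus x A.one) (A.oplus y A.one)) A.one := by
  intro x y hxy
  -- y'' = y
  have hdn' : A.oplus (A.oplus y A.one) A.one = y := by
    have h := A.R2 y A.one
    rwa [A.mul_one, A.mul_idem] at h
  have h4 := A.R4 (A.oplus y A.one) x
  rw [A.mul_comm (A.oplus y A.one) x, hxy, hdn'] at h4
  rw [h4, A.mul_comm]
end

section
/- Let (R,⊕,·,0,1) be an algebra of type (2,2,0,0) such that: (R,·,1) is an idempotent commutative monoid with x·0=0; with x' := x⊕1, x∧y := x·y, x∨y := (x'y')', the structure (R,∨,∧,',0,1) is an orthomodular lattice; ⊕ is commutative; x⊕1 = x' for all x; and x⊕y = x∨y whenever x ≤ y'. Then (R,⊕,·,0,1) is an RLSE, i.e., satisfies identities (R1)–(R4). -/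
/-- Converse part of Theorem 2: if the induced structure is an orthomodular lattice,
⊕ is commutative and coincides with ∨ on orthogonal pairs, then (R,⊕,·,0,1) is an RLSE. -/
theorem rlse_of_orthomodular {R : Type*} (oplus mul : R → R → R) (zero one : R)
    (mul_comm : ∀ x y, mul x y = mul y x)
    (mul_assoc : ∀ x y z, mul (mul x y) z = mul x (mul y z))
    (mul_one : ∀ x, mul x one = x)
    (mul_idem : ∀ x, mul x x = x)
    (mul_zero : ∀ x, mul x zero = zero)
    -- abbreviations
    (le : R → R → Prop) (hle : ∀ x y, le x y ↔ mul x y = x)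
    (compl : R → R) (hcompl : ∀ x, compl x = oplus x one)
    (sup : R → R → R) (hsup : ∀ x y, sup x y = compl (mul (compl x) (compl y)))
    -- (R,∨,∧,',0,1) is an orthomodular lattice:
    (bot_le : ∀ x, le zero x) (le_top : ∀ x, le x one)
    (le_sup_left : ∀ x y, le x (sup x y)) (le_sup_right : ∀ x y, le y (sup x y))
    (sup_le : ∀ x y z, le x z → le y z → le (sup x y) z)
    (compl_invol : ∀ x, compl (compl x) = x)
    (compl_antitone : ∀ x y, le x y → le (compl y) (compl x))
    (inf_compl : ∀ x, mul x (compl x) = zero)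
    (sup_compl : ∀ x, sup x (compl x) = one)
    (oml : ∀ x y, le x y → y = sup x (mul y (compl x)))
    -- ⊕ is commutative and coincides with ∨ on orthogonal pairs
    (oplus_comm : ∀ x y, oplus x y = oplus y x)
    (oplus_orth : ∀ x y, le x (compl y) → oplus x y = sup x y) :
    -- then (R1)–(R4) hold
    (∀ x y, oplus x y = oplus y x) ∧
    (∀ x y, oplus (mul (oplus (mul x y) one) (oplus x one)) one = x) ∧
    (∀ x y, mul (oplus (mul (oplus (mul x y) one) x) one) x = mul x y) ∧
    (∀ x y, oplus (mul x y) (oplus x one) = oplus (mul (oplus (mul x y) one) x) one) := by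
  -- basic order facts
  have antisymm : ∀ a b, le a b → le b a → a = b := by
    intro a b h1 h2
    rw [hle] at h1 h2
    rw [← h1, mul_comm, h2]
  have le_refl : ∀ a, le a a := fun a => (hle a a).2 (mul_idem a)
  have le_inf_left : ∀ a b, le (mul a b) a := by
    intro a b
    rw [hle, mul_comm a b, mul_assoc, mul_idem]
  have le_inf_right : ∀ a b, le (mul a b) b := by
    intro a b
    rw [hle, mul_assoc, mul_idem]
  have le_inf : ∀ a u v, le a u → le a v → le a (mul u v) := by
    intro a u v hu hv
    rw [hle] at hu hv ⊢
    rw [← mul_assoc, hu, hv]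
  have le_trans : ∀ a b c, le a b → le b c → le a c := by
    intro a b c h1 h2
    rw [hle] at h1 h2 ⊢
    rw [← h1, mul_assoc, h2]
  have sup_inf_right : ∀ a b, sup (mul a b) a = a := by
    intro a b
    exact antisymm _ _ (sup_le _ _ _ (le_inf_left a b) (le_refl a)) (le_sup_right _ _)
  have sup_zero : ∀ a, sup a zero = a :=
    fun a => antisymm _ _ (sup_le _ _ _ (le_refl a) (bot_le a)) (le_sup_left _ _)
  have compl_sup : ∀ a b, compl (sup a b) = mul (compl a) (compl b) := by
    intro a b; rw [hsup, compl_invol]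
  -- key orthomodular fact: a ≤ b' → (a ∨ b) ∧ b' = a
  have key : ∀ a b, le a (compl b) → mul (sup a b) (compl b) = a := by
    intro a b hab
    set c := mul (sup a b) (compl b) with hc
    have hac : le a c := le_inf _ _ _ (le_sup_left a b) hab
    have hd : mul c (compl a) = zero := by
      apply antisymm _ _ _ (bot_le _)
      have h1 : le (mul c (compl a)) (sup a b) :=
        le_trans _ _ _ (le_inf_left c (compl a)) (le_inf_left _ _)
      have h2 : le (mul c (compl a)) (compl (sup a b)) := by
        rw [compl_sup]
        exact le_inf _ _ _ (le_inf_right c (compl a))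
          (le_trans _ _ _ (le_inf_left c (compl a)) (le_inf_right _ _))
      have := le_inf _ _ _ h1 h2
      rw [inf_compl] at this
      exact this
    have := oml a c hac
    rw [hd, sup_zero] at this
    exact this
  refine ⟨oplus_comm, ?_, ?_, ?_⟩
  · intro x y
    have : oplus (mul (oplus (mul x y) one) (oplus x one)) one
        = sup (mul x y) x := by
      rw [← hcompl, ← hcompl, ← hcompl, ← hsup]
    rw [this, sup_inf_right]
  · intro x y
    have hxy : le (mul x y) (compl (compl x)) := by
      rw [compl_invol]; exact le_inf_left x y
    have e1 : oplus (mul (oplus (mul x y) one) x) one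
        = sup (mul x y) (compl x) := by
      rw [← hcompl, ← hcompl, hsup (mul x y) (compl x), compl_invol]
    rw [e1]
    have := key (mul x y) (compl x) hxy
    rw [compl_invol] at this
    exact this
  · intro x y
    have hxy : le (mul x y) (compl (compl x)) := by
      rw [compl_invol]; exact le_inf_left x y
    rw [← hcompl x, oplus_orth _ _ hxy, ← hcompl, ← hcompl,
      hsup (mul x y) (compl x), compl_invol]
end

section
/- In any RLSE, identity (R4) is equivalent to the condition: for all x,y with x ≤ y' (orthogonality), (x⊕y)⊕1 = (x⊕1)·(y⊕1). -/
/-- In an algebra satisfying the monoid axioms and (R1)–(R3), identity (R4) is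
equivalent to: `(x⊕y)⊕1 = (x⊕1)(y⊕1)` for all orthogonal `x, y` (i.e. `x ≤ y'`). -/
theorem rlse_R4_iff {R : Type*} (oplus mul : R → R → R) (zero one : R)
    (mul_comm : ∀ x y, mul x y = mul y x)
    (mul_assoc : ∀ x y z, mul (mul x y) z = mul x (mul y z))
    (mul_one : ∀ x, mul x one = x)
    (mul_idem : ∀ x, mul x x = x)
    (mul_zero : ∀ x, mul x zero = zero)
    (R1 : ∀ x y, oplus x y = oplus y x)
    (R2 : ∀ x y, oplus (mul (oplus (mul x y) one) (oplus x one)) one = x)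
    (R3 : ∀ x y, mul (oplus (mul (oplus (mul x y) one) x) one) x = mul x y) :
    (∀ x y, oplus (mul x y) (oplus x one) = oplus (mul (oplus (mul x y) one) x) one) ↔
    (∀ x y, mul x (oplus y one) = x →
      oplus (oplus x y) one = mul (oplus x one) (oplus y one)) := by
  have inv : ∀ z, oplus (oplus z one) one = z := by
    intro z
    have h := R2 z z
    rw [mul_idem z, mul_idem (oplus z one)] at h
    exact h
  constructor
  · intro R4 x y hxy
    have h := R4 (oplus y one) x
    rw [mul_comm (oplus y one) x, hxy, inv y] at h
    calc oplus (oplus x y) one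
        = oplus (oplus (mul (oplus x one) (oplus y one)) one) one := by rw [h]
      _ = mul (oplus x one) (oplus y one) := inv _
  · intro H x y
    have hax : mul (mul x y) x = mul x y := by
      rw [mul_comm, ← mul_assoc, mul_idem]
    have horth : mul (mul x y) (oplus (oplus x one) one) = mul x y := by
      rw [inv x]; exact hax
    have h := H (mul x y) (oplus x one) horth
    rw [inv x] at h
    calc oplus (mul x y) (oplus x one)
        = oplus (oplus (oplus (mul x y) (oplus x one)) one) one := (inv _).symm
      _ = oplus (mul (oplus (mul x y) one) x) one := by rw [h]
end

section
/- An RLSE (R,⊕,·,0,1) is a Boolean ring if and only if it is weakly associative (i.e., satisfies (x⊕y)⊕1 = x⊕(y⊕1)) and satisfies the identity (T): (xy'⊕1)(x'y⊕1)⊕1 = x⊕y, where x' denotes x⊕1. -/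
namespace RLSE

variable {R : Type*} (A : RLSE R)

/-- The join operation `x ∨ y = (x' ⬝ y')'`. -/
def j (x y : R) : R :=
  A.oplus (A.mul (A.oplus x A.one) (A.oplus y A.one)) A.one

theorem one_mul' (x : R) : A.mul A.one x = x := by
  rw [A.mul_comm]; exact A.mul_one x

theorem zero_mul' (x : R) : A.mul A.zero x = A.zero := by
  rw [A.mul_comm]; exact A.mul_zero x

/-- Involution: `x'' = x`. -/
theorem invol (x : R) : A.oplus (A.oplus x A.one) A.one = x := by
  have h := A.R2 x A.one
  rwa [A.mul_one, A.mul_idem] at h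

theorem pr_inj {a b : R} (h : A.oplus a A.one = A.oplus b A.one) : a = b := by
  rw [← A.invol a, h, A.invol]

theorem pr_eq' {a b : R} (h : A.oplus a A.one = b) : a = A.oplus b A.one := by
  rw [← h, A.invol]

/-- `0' = 1`. -/
theorem pr0 : A.oplus A.zero A.one = A.one := by
  have h := A.R2 A.one (A.oplus A.zero A.one)
  rwa [A.one_mul', A.invol, A.zero_mul'] at h

/-- `1' = 0`. -/
theorem pr1 : A.oplus A.one A.one = A.zero := by
  have h : A.oplus (A.oplus A.zero A.one) A.one = A.oplus A.one A.one := by rw [A.pr0]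
  rw [A.invol] at h
  exact h.symm

theorem zero_oplus (x : R) : A.oplus A.zero x = x := by
  have key : ∀ y : R, A.oplus A.zero (A.oplus y A.one) = A.oplus y A.one := by
    intro y
    have h := A.R4 y A.zero
    rwa [A.mul_zero, A.pr0, A.one_mul'] at h
  have h := key (A.oplus x A.one)
  rwa [A.invol] at h

theorem oplus_zero (x : R) : A.oplus x A.zero = x := by
  rw [A.R1]; exact A.zero_oplus x

/-- `(x x' z)' x = x` -/
theorem p7 (x z : R) :
    A.mul (A.oplus (A.mul (A.mul x (A.oplus x A.one)) z) A.one) x = x := by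
  have h := A.R2 (A.oplus x A.one) (A.mul x z)
  rw [A.invol, ← A.mul_assoc, A.mul_comm (A.oplus x A.one) x] at h
  exact A.pr_inj h

/-- `(x x' z)' x' = x'` -/
theorem p6 (x z : R) :
    A.mul (A.oplus (A.mul (A.mul x (A.oplus x A.one)) z) A.one) (A.oplus x A.one)
      = A.oplus x A.one := by
  have h := A.R2 x (A.mul (A.oplus x A.one) z)
  rw [← A.mul_assoc] at h
  exact A.pr_eq' h

/-- `x ⬝ x' = 0`. -/
theorem mulcompl (x : R) : A.mul x (A.oplus x A.one) = A.zero := by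
  set a := A.mul x (A.oplus x A.one) with ha
  have ha1 : ∀ y, A.mul (A.oplus (A.mul a y) A.one) a = a := by
    intro y
    rw [ha, ← A.mul_assoc, A.p7]
  have ha2 : A.mul (A.oplus a A.one) a = a := by
    have h := ha1 A.one
    rwa [A.mul_one] at h
  have h := A.R3 a A.zero
  rw [ha1 A.zero, ha2, A.mul_zero] at h
  exact h

/-- `x ∨ x' = 1`. -/
theorem jcompl (x : R) : A.j x (A.oplus x A.one) = A.one := by
  unfold j
  rw [A.invol, A.mul_comm, A.mulcompl, A.pr0]

theorem jcomm (x y : R) : A.j x y = A.j y x := by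
  unfold j; rw [A.mul_comm]

theorem jassoc (x y z : R) : A.j (A.j x y) z = A.j x (A.j y z) := by
  unfold j
  rw [A.invol, A.invol, A.mul_assoc]

theorem jzero (x : R) : A.j A.zero x = x := by
  unfold j; rw [A.pr0, A.one_mul', A.invol]

theorem jzero' (x : R) : A.j x A.zero = x := by
  rw [A.jcomm]; exact A.jzero x

theorem jtop (x : R) : A.j x A.one = A.one := by
  unfold j; rw [A.pr1, A.mul_zero, A.pr0]

/-- De Morgan: `(x ⬝ y)' = x' ∨ y'`. -/
theorem demorgan (x y : R) :
    A.oplus (A.mul x y) A.one = A.j (A.oplus x A.one) (A.oplus y A.one) := by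
  unfold j; rw [A.invol, A.invol]

/-- Absorption: `(x ⬝ y) ∨ x = x`. -/
theorem absorb1 (x y : R) : A.j (A.mul x y) x = x := A.R2 x y

/-- Absorption: `x ⬝ (x ∨ y) = x`. -/
theorem absorb2 (x y : R) : A.mul x (A.j x y) = x := by
  have h := A.R2 (A.oplus x A.one) (A.oplus y A.one)
  rw [A.invol] at h
  have h2 := A.pr_inj h
  rw [A.mul_comm]
  exact h2

/-- Orthomodularity-style law from R3: `((x⬝y) ∨ x') ⬝ x = x ⬝ y`. -/
theorem om (x y : R) : A.mul (A.j (A.mul x y) (A.oplus x A.one)) x = A.mul x y := by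
  unfold j
  rw [A.invol]
  exact A.R3 x y

theorem sup_closed {x u v : R} (h1 : A.mul u x = u) (h2 : A.mul v x = v) :
    A.mul (A.j u v) x = A.j u v := by
  have e0 : A.j u x = x := by
    rw [← h1, A.mul_comm u x]; exact A.absorb1 x u
  have e1 : A.j v x = x := by
    rw [← h2, A.mul_comm v x]; exact A.absorb1 x v
  have e2 : A.j (A.j u v) x = x := by
    rw [A.jassoc, e1]; exact e0
  have h := A.absorb2 (A.j u v) x
  rwa [e2] at h


section WT

variable (hW : ∀ x y : R, A.oplus (A.oplus x y) A.one = A.oplus x (A.oplus y A.one))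
variable (hT : ∀ x y : R,
    A.oplus (A.mul (A.oplus (A.mul x (A.oplus y A.one)) A.one)
      (A.oplus (A.mul (A.oplus x A.one) y) A.one)) A.one = A.oplus x y)

include hW hT

/-- `(x y')' ⬝ (x' y)' = x ⊕ y'`. -/
theorem t2a (x y : R) :
    A.mul (A.oplus (A.mul x (A.oplus y A.one)) A.one)
      (A.oplus (A.mul (A.oplus x A.one) y) A.one) = A.oplus x (A.oplus y A.one) := by
  have h := A.pr_eq' (hT x y)
  rwa [hW x y] at h

/-- `(x y)' ⬝ (x' y')' = x ⊕ y`. -/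
theorem t2 (x y : R) :
    A.mul (A.oplus (A.mul x y) A.one)
      (A.oplus (A.mul (A.oplus x A.one) (A.oplus y A.one)) A.one) = A.oplus x y := by
  have h := A.t2a hW hT x (A.oplus y A.one)
  simp only [A.invol] at h
  exact h

theorem add_self (x : R) : A.oplus x x = A.zero := by
  have h := A.t2 hW hT x x
  rw [A.mul_idem, A.mul_idem, A.invol, A.mul_comm, A.mulcompl] at h
  exact h.symm

/-- `(x y) ∨ (x' y') = (x y')' ⬝ (x' y)'`. -/
theorem l8 (x y : R) :
    A.j (A.mul x y) (A.mul (A.oplus x A.one) (A.oplus y A.one)) =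
      A.mul (A.oplus (A.mul x (A.oplus y A.one)) A.one)
        (A.oplus (A.mul (A.oplus x A.one) y) A.one) := by
  show A.oplus (A.mul (A.oplus (A.mul x y) A.one)
      (A.oplus (A.mul (A.oplus x A.one) (A.oplus y A.one)) A.one)) A.one = _
  rw [A.t2 hW hT x y, hW x y]
  exact (A.t2a hW hT x y).symm

/-- `(x y') ∨ (x' y)` is the complement of `(x y) ∨ (x' y')`. -/
theorem compl_c1 (x y : R) :
    A.j (A.mul x (A.oplus y A.one)) (A.mul (A.oplus x A.one) y) =
      A.oplus (A.j (A.mul x y) (A.mul (A.oplus x A.one) (A.oplus y A.one))) A.one := by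
  rw [A.l8 hW hT x y]
  rfl

omit hW hT in
theorem jperm (a b c d : R) : A.j (A.j a b) (A.j c d) = A.j (A.j a d) (A.j b c) := by
  rw [A.jassoc a d (A.j b c), A.jassoc a b (A.j c d)]
  congr 1
  rw [← A.jassoc b c d, A.jcomm (A.j b c) d, ← A.jassoc d b c, A.jcomm d b, A.jassoc b d c,
    A.jcomm d c]

theorem four (x y : R) :
    A.j (A.j (A.mul x y) (A.mul x (A.oplus y A.one)))
        (A.j (A.mul (A.oplus x A.one) y) (A.mul (A.oplus x A.one) (A.oplus y A.one))) =
      A.one := by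
  rw [A.jperm, A.compl_c1 hW hT x y]
  exact A.jcompl (A.j (A.mul x y) (A.mul (A.oplus x A.one) (A.oplus y A.one)))

end WT

theorem keyM {x d e : R} (hd : A.mul x d = d) (he : A.mul e (A.oplus x A.one) = e) :
    A.mul x (A.j d e) = d := by
  have hx_e : A.mul x (A.oplus e A.one) = x := by
    have h1 : A.j (A.oplus e A.one) x = A.oplus e A.one := by
      unfold j
      rw [A.invol, he]
    have h2 := A.absorb2 x (A.oplus e A.one)
    rwa [A.jcomm, h1] at h2
  have hed : A.mul (A.oplus e A.one) d = d := by
    calc A.mul (A.oplus e A.one) d = A.mul (A.oplus e A.one) (A.mul x d) := by rw [hd]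
      _ = A.mul (A.mul (A.oplus e A.one) x) d := (A.mul_assoc _ _ _).symm
      _ = A.mul (A.mul x (A.oplus e A.one)) d := by rw [A.mul_comm (A.oplus e A.one) x]
      _ = A.mul x d := by rw [hx_e]
      _ = d := hd
  have hjde : A.mul (A.j d e) (A.oplus e A.one) = d := by
    have h3 := A.om (A.oplus e A.one) d
    rwa [hed, A.invol] at h3
  calc A.mul x (A.j d e) = A.mul (A.mul x (A.oplus e A.one)) (A.j d e) := by rw [hx_e]
    _ = A.mul x (A.mul (A.oplus e A.one) (A.j d e)) := A.mul_assoc _ _ _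
    _ = A.mul x (A.mul (A.j d e) (A.oplus e A.one)) := by
        rw [A.mul_comm (A.oplus e A.one) (A.j d e)]
    _ = A.mul x d := by rw [hjde]
    _ = d := hd

section WT2

variable (hW : ∀ x y : R, A.oplus (A.oplus x y) A.one = A.oplus x (A.oplus y A.one))
variable (hT : ∀ x y : R,
    A.oplus (A.mul (A.oplus (A.mul x (A.oplus y A.one)) A.one)
      (A.oplus (A.mul (A.oplus x A.one) y) A.one)) A.one = A.oplus x y)

include hW hT

/-- Compatibility: `(x y) ∨ (x y') = x`. -/
theorem compat (x y : R) :
    A.j (A.mul x y) (A.mul x (A.oplus y A.one)) = x := by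
  have hu1 : A.mul (A.mul x y) x = A.mul x y := by
    rw [A.mul_comm (A.mul x y) x, ← A.mul_assoc, A.mul_idem]
  have hu2 : A.mul (A.mul x (A.oplus y A.one)) x = A.mul x (A.oplus y A.one) := by
    rw [A.mul_comm _ x, ← A.mul_assoc, A.mul_idem]
  have hv1 : A.mul (A.mul (A.oplus x A.one) y) (A.oplus x A.one)
      = A.mul (A.oplus x A.one) y := by
    rw [A.mul_comm _ (A.oplus x A.one), ← A.mul_assoc, A.mul_idem]
  have hv2 : A.mul (A.mul (A.oplus x A.one) (A.oplus y A.one)) (A.oplus x A.one)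
      = A.mul (A.oplus x A.one) (A.oplus y A.one) := by
    rw [A.mul_comm _ (A.oplus x A.one), ← A.mul_assoc, A.mul_idem]
  have hd : A.mul x (A.j (A.mul x y) (A.mul x (A.oplus y A.one)))
      = A.j (A.mul x y) (A.mul x (A.oplus y A.one)) := by
    rw [A.mul_comm]; exact A.sup_closed hu1 hu2
  have he : A.mul (A.j (A.mul (A.oplus x A.one) y)
        (A.mul (A.oplus x A.one) (A.oplus y A.one))) (A.oplus x A.one)
      = A.j (A.mul (A.oplus x A.one) y) (A.mul (A.oplus x A.one) (A.oplus y A.one)) :=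
    A.sup_closed hv1 hv2
  have hm := A.keyM hd he
  rw [A.four hW hT x y, A.mul_one] at hm
  exact hm.symm

/-- `(y ∨ z) ⬝ y' = y' ⬝ z`. -/
theorem keyK (y z : R) :
    A.mul (A.j y z) (A.oplus y A.one) = A.mul (A.oplus y A.one) z := by
  have habs : A.j y (A.mul z y) = y := by
    rw [A.jcomm, A.mul_comm]; exact A.absorb1 y z
  have step1 : A.j y z = A.j y (A.mul (A.oplus y A.one) z) := by
    conv_lhs => rw [← A.compat hW hT z y]
    rw [← A.jassoc, habs, A.mul_comm z (A.oplus y A.one)]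
  have hd2 : A.mul (A.oplus y A.one) (A.mul (A.oplus y A.one) z)
      = A.mul (A.oplus y A.one) z := by
    rw [← A.mul_assoc, A.mul_idem]
  have he2 : A.mul y (A.oplus (A.oplus y A.one) A.one) = y := by
    rw [A.invol, A.mul_idem]
  have hm := A.keyM hd2 he2
  rw [A.jcomm (A.mul (A.oplus y A.one) z) y] at hm
  rw [step1, A.mul_comm (A.j y (A.mul (A.oplus y A.one) z)) (A.oplus y A.one)]
  exact hm

/-- Distributivity: `x ⬝ (y ∨ z) = (x y) ∨ (x z)`. -/
theorem distribD (x y z : R) :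
    A.mul x (A.j y z) = A.j (A.mul x y) (A.mul x z) := by
  have ha_y : A.mul (A.mul x (A.j y z)) y = A.mul x y := by
    rw [A.mul_assoc, A.mul_comm (A.j y z) y, A.absorb2]
  have ha_y' : A.mul (A.mul x (A.j y z)) (A.oplus y A.one)
      = A.mul x (A.mul (A.oplus y A.one) z) := by
    rw [A.mul_assoc, A.keyK hW hT y z]
  have lhs_eq := (A.compat hW hT (A.mul x (A.j y z)) y).symm
  rw [ha_y, ha_y'] at lhs_eq
  have habs2 : A.j (A.mul x y) (A.mul (A.mul x z) y) = A.mul x y := by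
    have e : A.mul (A.mul x z) y = A.mul (A.mul x y) z := by
      rw [A.mul_assoc, A.mul_assoc, A.mul_comm z y]
    rw [e, A.jcomm]
    exact A.absorb1 (A.mul x y) z
  have e2 : A.mul (A.mul x z) (A.oplus y A.one) = A.mul x (A.mul (A.oplus y A.one) z) := by
    rw [A.mul_assoc, A.mul_comm z (A.oplus y A.one)]
  calc A.mul x (A.j y z)
      = A.j (A.mul x y) (A.mul x (A.mul (A.oplus y A.one) z)) := lhs_eq
    _ = A.j (A.j (A.mul x y) (A.mul (A.mul x z) y)) (A.mul (A.mul x z) (A.oplus y A.one)) := by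
        rw [habs2, e2]
    _ = A.j (A.mul x y) (A.j (A.mul (A.mul x z) y) (A.mul (A.mul x z) (A.oplus y A.one))) :=
        A.jassoc _ _ _
    _ = A.j (A.mul x y) (A.mul x z) := by rw [A.compat hW hT (A.mul x z) y]

end WT2

end RLSE

/-- An RLSE is a Boolean ring iff it is weakly associative and satisfies identity (T).
Being a Boolean ring amounts to the remaining ring axioms: associativity of ⊕,
`x ⊕ 0 = x`, `x ⊕ x = 0` and distributivity (commutativity of ⊕ and ·, and
idempotency of · already hold in any RLSE). -/
theorem rlse_boolean_ring_iff {R : Type*} (A : RLSE R) :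
    ((∀ x y z : R, A.oplus (A.oplus x y) z = A.oplus x (A.oplus y z)) ∧
     (∀ x : R, A.oplus x A.zero = x) ∧
     (∀ x : R, A.oplus x x = A.zero) ∧
     (∀ x y z : R, A.mul x (A.oplus y z) = A.oplus (A.mul x y) (A.mul x z))) ↔
    ((∀ x y : R, A.oplus (A.oplus x y) A.one = A.oplus x (A.oplus y A.one)) ∧
     (∀ x y : R,
       A.oplus
         (A.mul (A.oplus (A.mul x (A.oplus y A.one)) A.one)
                (A.oplus (A.mul (A.oplus x A.one) y) A.one)) A.one
       = A.oplus x y)) := by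
  constructor
  · rintro ⟨h1, h2, h3, h4⟩
    refine ⟨fun x y => h1 x y A.one, ?_⟩
    letI : Add R := ⟨A.oplus⟩
    letI : Mul R := ⟨A.mul⟩
    letI : Zero R := ⟨A.zero⟩
    letI : One R := ⟨A.one⟩
    letI : Neg R := ⟨id⟩
    letI : CommRing R :=
      { add := A.oplus
        add_assoc := h1
        zero := A.zero
        zero_add := fun x => by show A.oplus A.zero x = x; rw [A.R1]; exact h2 x
        add_zero := h2
        add_comm := A.R1
        mul := A.mul
        left_distrib := h4
        right_distrib := fun x y z => by
          show A.mul (A.oplus x y) z = A.oplus (A.mul x z) (A.mul y z)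
          rw [A.mul_comm, h4, A.mul_comm z x, A.mul_comm z y]
        zero_mul := fun x => by show A.mul A.zero x = A.zero; rw [A.mul_comm]; exact A.mul_zero x
        mul_zero := A.mul_zero
        mul_assoc := A.mul_assoc
        one := A.one
        one_mul := fun x => by show A.mul A.one x = x; rw [A.mul_comm]; exact A.mul_one x
        mul_one := A.mul_one
        neg := id
        nsmul := nsmulRec
        zsmul := zsmulRec
        neg_add_cancel := h3
        mul_comm := A.mul_comm }
    intro x y
    have hx : x * x = x := A.mul_idem x
    have hy : y * y = y := A.mul_idem y
    have h2' : (1 : R) + 1 = 0 := h3 A.one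
    show (x * (y + 1) + 1) * ((x + 1) * y + 1) + 1 = x + y
    linear_combination (y*y + y) * hx + (2*x) * hy + (3*x*y + 1) * h2'
  · rintro ⟨hW, hT⟩
    letI instMax : Max R := ⟨A.j⟩
    letI instMin : Min R := ⟨A.mul⟩
    letI instLat : Lattice R := Lattice.mk' A.jcomm A.jassoc A.mul_comm A.mul_assoc
      (fun a b => by show A.j a (A.mul a b) = a; rw [A.jcomm]; exact A.absorb1 a b)
      (fun a b => A.absorb2 a b)
    letI instDL : DistribLattice R :=
      DistribLattice.ofInfSupLe (fun a b c => le_of_eq (A.distribD hW hT a b c))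
    letI : HasCompl R := ⟨fun a => A.oplus a A.one⟩
    letI : Top R := ⟨A.one⟩
    letI : Bot R := ⟨A.zero⟩
    letI instBA : BooleanAlgebra R :=
      { instDL with
        compl := fun a => A.oplus a A.one
        top := A.one
        bot := A.zero
        sdiff := fun a b => A.mul a (A.oplus b A.one)
        himp := fun a b => A.j b (A.oplus a A.one)
        inf_compl_le_bot := fun x => le_of_eq (A.mulcompl x)
        top_le_sup_compl := fun x => le_of_eq (A.jcompl x).symm
        le_top := fun a => sup_eq_right.mp (A.jtop a)
        bot_le := fun a => sup_eq_right.mp (A.jzero a)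
        sdiff_eq := fun _ _ => rfl
        himp_eq := fun _ _ => rfl }
    have hsymm : ∀ a b : R, A.oplus a b = symmDiff a b := by
      intro a b
      calc A.oplus a b
          = A.mul (A.oplus (A.mul a b) A.one)
              (A.oplus (A.mul (A.oplus a A.one) (A.oplus b A.one)) A.one) :=
            (A.t2 hW hT a b).symm
        _ = A.mul (A.j (A.oplus a A.one) (A.oplus b A.one))
              (A.oplus (A.mul (A.oplus a A.one) (A.oplus b A.one)) A.one) := by
            rw [A.demorgan a b]
        _ = A.mul (A.j a b) (A.j (A.oplus a A.one) (A.oplus b A.one)) :=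
            A.mul_comm (A.j (A.oplus a A.one) (A.oplus b A.one))
              (A.oplus (A.mul (A.oplus a A.one) (A.oplus b A.one)) A.one)
        _ = symmDiff a b := by rw [symmDiff_eq']; rfl
    refine ⟨?_, A.oplus_zero, A.add_self hW hT, ?_⟩
    · intro x y z
      simp only [hsymm]
      exact symmDiff_assoc x y z
    · intro x y z
      simp only [hsymm]
      exact inf_symmDiff_distrib_left x y z
end

section
/- In an RLSE satisfying weak associativity and identity (T), the induced orthomodular lattice is a Boolean algebra; specifically, for all x,y the element c(x,y) := (x∧y)∨(x∧y')∨(x'∧y)∨(x'∧y') equals 1, so all pairs of elements commute and the lattice is distributive. -/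
namespace RLSEAux

variable {R : Type*}

instance instAssoc (A : RLSE R) : Std.Associative A.mul := ⟨A.mul_assoc⟩
instance instComm (A : RLSE R) : Std.Commutative A.mul := ⟨A.mul_comm⟩
instance instIdem (A : RLSE R) : Std.IdempotentOp A.mul := ⟨A.mul_idem⟩

/- Pure AC (+idempotence) facts, with variable atoms (ac_rfl handles these). -/
lemma ac1 (A : RLSE R) (a b : R) : A.mul (A.mul a b) a = A.mul a b := by ac_rfl
lemma ac1b (A : RLSE R) (a b : R) : A.mul (A.mul a b) b = A.mul a b := by ac_rfl
lemma ac2 (A : RLSE R) (v p q y : R) :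
    A.mul (A.mul v (A.mul p q)) y = A.mul (A.mul (A.mul v y) p) q := by ac_rfl
lemma ac3 (A : RLSE R) (v p q z : R) :
    A.mul (A.mul v (A.mul p q)) z = A.mul (A.mul (A.mul v z) q) p := by ac_rfl
lemma ac4 (A : RLSE R) (u p q : R) :
    A.mul u (A.mul p q) = A.mul (A.mul p u) q := by ac_rfl
lemma ac5 (A : RLSE R) (a b c : R) :
    A.mul (A.mul a b) c = A.mul (A.mul c a) b := by ac_rfl
lemma ac6 (A : RLSE R) (a b c d : R) :
    A.mul (A.mul (A.mul a b) c) d = A.mul (A.mul a d) (A.mul b c) := by ac_rfl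
lemma ac7 (A : RLSE R) (p q x j y : R) :
    A.mul (A.mul (A.mul p q) (A.mul x j)) y
      = A.mul (A.mul (A.mul x y) p) (A.mul q j) := by ac_rfl
lemma ac8 (A : RLSE R) (p q x j z : R) :
    A.mul (A.mul (A.mul p q) (A.mul x j)) z
      = A.mul (A.mul (A.mul x z) q) (A.mul p j) := by ac_rfl
lemma ac9 (A : RLSE R) (p q x j : R) :
    A.mul (A.mul (A.mul p q) (A.mul x j)) j = A.mul (A.mul p q) (A.mul x j) := by
  rw [A.mul_assoc, A.mul_assoc x j j, A.mul_idem]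
lemma ac11 (A : RLSE R) (x y j : R) :
    A.mul (A.mul x y) (A.mul x j) = A.mul x (A.mul j y) := by ac_rfl

/-- Double complement: (x⊕1)⊕1 = x. -/
lemma dne (A : RLSE R) (x : R) : A.oplus (A.oplus x A.one) A.one = x := by
  have h := A.R2 x A.one
  rwa [A.mul_one, A.mul_idem] at h

/-- e := 1⊕1 is multiplicatively absorbing. -/
lemma mul_e (A : RLSE R) (w : R) :
    A.mul w (A.oplus A.one A.one) = A.oplus A.one A.one := by
  have h := A.R2 A.one (A.oplus w A.one)
  rw [A.mul_comm A.one, A.mul_one, dne A] at h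
  have h2 : A.oplus (A.oplus (A.mul w (A.oplus A.one A.one)) A.one) A.one
      = A.oplus A.one A.one := by rw [h]
  rwa [dne A] at h2

lemma e_eq_zero (A : RLSE R) : A.oplus A.one A.one = A.zero := by
  have h := mul_e A A.zero
  rw [A.mul_comm A.zero, A.mul_zero] at h
  exact h.symm

lemma zero_compl (A : RLSE R) : A.oplus A.zero A.one = A.one := by
  rw [← e_eq_zero A]
  exact dne A A.one

/-- x ∧ x' = 0. -/
lemma mul_compl_self (A : RLSE R) (x : R) :
    A.mul x (A.oplus x A.one) = A.zero := by
  have h := A.R3 x A.zero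
  rw [A.mul_zero, zero_compl A, A.mul_comm A.one, A.mul_one] at h
  rwa [A.mul_comm] at h

/-- Antitonicity of complement: a ≤ b → b' ≤ a' (in product form). -/
lemma antitone (A : RLSE R) {a b : R} (h : A.mul a b = a) :
    A.mul (A.oplus a A.one) (A.oplus b A.one) = A.oplus b A.one := by
  have h2 := A.R2 b a
  rw [A.mul_comm b a, h] at h2
  have h3 : A.oplus (A.oplus (A.mul (A.oplus a A.one) (A.oplus b A.one)) A.one) A.one
      = A.oplus b A.one := by rw [h2]
  rwa [dne A] at h3

/-- Orthomodularity helper: if p ≤ x and x ∧ p' = 0 then x = p. -/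
lemma om (A : RLSE R) {x p : R} (h1 : A.mul x p = p)
    (h2 : A.mul (A.oplus p A.one) x = A.zero) : x = p := by
  have h3 := A.R3 x p
  rwa [h1, h2, zero_compl A, A.mul_comm A.one, A.mul_one] at h3

section WithWaT

variable (A : RLSE R)
    (wa : ∀ x y : R, A.oplus (A.oplus x y) A.one = A.oplus x (A.oplus y A.one))
    (T : ∀ x y : R,
      A.oplus
        (A.mul (A.oplus (A.mul x (A.oplus y A.one)) A.one)
               (A.oplus (A.mul (A.oplus x A.one) y) A.one)) A.one
      = A.oplus x y)

include wa T

/-- Key lemma: if w∧y = 0 and w∧y' = 0 then w = 0. -/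
lemma zkey {w y : R} (h1 : A.mul w y = A.zero)
    (h2 : A.mul w (A.oplus y A.one) = A.zero) : w = A.zero := by
  have hT1 := T w y
  rw [h2, zero_compl A, A.mul_comm A.one, A.mul_one, dne A] at hT1
  have hT2 := T w (A.oplus y A.one)
  rw [dne A, h1, zero_compl A, A.mul_comm A.one, A.mul_one, dne A] at hT2
  have hG := wa w y
  rw [← hT1, ← hT2] at hG
  have han := antitone A (ac1 A (A.oplus w A.one) y)
  rw [dne A, hG] at han
  rw [ac5 A (A.oplus w A.one) (A.oplus y A.one) w,
    mul_compl_self A, A.mul_comm A.zero, A.mul_zero] at han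
  exact han.symm

/-- For all v, y : v = (v∧y) ∨ (v∧y'). -/
lemma elem (v y : R) :
    A.oplus (A.mul (A.oplus (A.mul v y) A.one)
      (A.oplus (A.mul v (A.oplus y A.one)) A.one)) A.one = v := by
  have hw1 : A.mul (A.mul v (A.mul (A.oplus (A.mul v y) A.one)
      (A.oplus (A.mul v (A.oplus y A.one)) A.one))) y = A.zero := by
    rw [ac2 A v (A.oplus (A.mul v y) A.one)
        (A.oplus (A.mul v (A.oplus y A.one)) A.one) y,
      mul_compl_self A, A.mul_comm A.zero, A.mul_zero]
  have hw2 : A.mul (A.mul v (A.mul (A.oplus (A.mul v y) A.one)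
      (A.oplus (A.mul v (A.oplus y A.one)) A.one))) (A.oplus y A.one) = A.zero := by
    rw [ac3 A v (A.oplus (A.mul v y) A.one)
        (A.oplus (A.mul v (A.oplus y A.one)) A.one) (A.oplus y A.one),
      mul_compl_self A, A.mul_comm A.zero, A.mul_zero]
  have hw0 := zkey A wa T hw1 hw2
  have han1 := antitone A (ac1 A v y)
  have han2 := antitone A (ac1 A v (A.oplus y A.one))
  have hvP : A.mul (A.oplus v A.one) (A.mul (A.oplus (A.mul v y) A.one)
      (A.oplus (A.mul v (A.oplus y A.one)) A.one)) = A.oplus v A.one := by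
    calc A.mul (A.oplus v A.one) (A.mul (A.oplus (A.mul v y) A.one)
          (A.oplus (A.mul v (A.oplus y A.one)) A.one))
        = A.mul (A.mul (A.oplus (A.mul v y) A.one) (A.oplus v A.one))
            (A.oplus (A.mul v (A.oplus y A.one)) A.one) :=
          ac4 A (A.oplus v A.one) _ _
      _ = A.mul (A.oplus v A.one) (A.oplus (A.mul v (A.oplus y A.one)) A.one) := by
            rw [han1]
      _ = A.mul (A.oplus (A.mul v (A.oplus y A.one)) A.one) (A.oplus v A.one) :=
            A.mul_comm _ _
      _ = A.oplus v A.one := han2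
  have hvp := antitone A hvP
  rw [dne A] at hvp
  refine (om A ?_ ?_).symm
  · exact hvp
  · rw [dne A, A.mul_comm]
    exact hw0

lemma conj1 (x y : R) :
    A.oplus (A.mul (A.oplus (A.oplus (A.mul (A.oplus (A.oplus (A.mul
        (A.oplus (A.mul x y) A.one)
        (A.oplus (A.mul x (A.oplus y A.one)) A.one)) A.one) A.one)
        (A.oplus (A.mul (A.oplus x A.one) y) A.one)) A.one) A.one)
      (A.oplus (A.mul (A.oplus x A.one) (A.oplus y A.one)) A.one)) A.one = A.one := by
  simp only [dne A]
  have hbc : A.mul (A.oplus (A.mul x (A.oplus y A.one)) A.one)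
      (A.oplus (A.mul (A.oplus x A.one) y) A.one) = A.oplus (A.oplus x y) A.one := by
    have h := T x y
    have h2 := dne A (A.mul (A.oplus (A.mul x (A.oplus y A.one)) A.one)
      (A.oplus (A.mul (A.oplus x A.one) y) A.one))
    rw [h] at h2
    exact h2.symm
  have had : A.mul (A.oplus (A.mul x y) A.one)
      (A.oplus (A.mul (A.oplus x A.one) (A.oplus y A.one)) A.one) = A.oplus x y := by
    have h := T x (A.oplus y A.one)
    rw [dne A, ← wa x y] at h
    have h2 := dne A (A.mul (A.oplus (A.mul x y) A.one)
      (A.oplus (A.mul (A.oplus x A.one) (A.oplus y A.one)) A.one))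
    rw [h] at h2
    rw [dne A] at h2
    exact h2.symm
  rw [ac6 A (A.oplus (A.mul x y) A.one) (A.oplus (A.mul x (A.oplus y A.one)) A.one)
      (A.oplus (A.mul (A.oplus x A.one) y) A.one)
      (A.oplus (A.mul (A.oplus x A.one) (A.oplus y A.one)) A.one),
    had, hbc, mul_compl_self A]
  exact zero_compl A

lemma conj2 (x y z : R) :
    A.mul x (A.oplus (A.mul (A.oplus y A.one) (A.oplus z A.one)) A.one)
      = A.oplus (A.mul (A.oplus (A.mul x y) A.one) (A.oplus (A.mul x z) A.one)) A.one := by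
  have hJy : A.mul (A.oplus (A.mul (A.oplus y A.one) (A.oplus z A.one)) A.one) y = y := by
    have han := antitone A (ac1 A (A.oplus y A.one) (A.oplus z A.one))
    rwa [dne A] at han
  have hJz : A.mul (A.oplus (A.mul (A.oplus y A.one) (A.oplus z A.one)) A.one) z = z := by
    have han := antitone A (ac1b A (A.oplus y A.one) (A.oplus z A.one))
    rwa [dne A] at han
  have hxyL : A.mul (A.mul x y)
      (A.mul x (A.oplus (A.mul (A.oplus y A.one) (A.oplus z A.one)) A.one)) = A.mul x y := by
    rw [ac11 A x y (A.oplus (A.mul (A.oplus y A.one) (A.oplus z A.one)) A.one), hJy]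
  have hxzL : A.mul (A.mul x z)
      (A.mul x (A.oplus (A.mul (A.oplus y A.one) (A.oplus z A.one)) A.one)) = A.mul x z := by
    rw [ac11 A x z (A.oplus (A.mul (A.oplus y A.one) (A.oplus z A.one)) A.one), hJz]
  have ant1 := antitone A hxyL
  have ant2 := antitone A hxzL
  have hL' : A.mul (A.oplus (A.mul x (A.oplus (A.mul (A.oplus y A.one)
        (A.oplus z A.one)) A.one)) A.one)
      (A.mul (A.oplus (A.mul x y) A.one) (A.oplus (A.mul x z) A.one))
      = A.oplus (A.mul x (A.oplus (A.mul (A.oplus y A.one)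
        (A.oplus z A.one)) A.one)) A.one := by
    rw [ac4 A _ (A.oplus (A.mul x y) A.one) (A.oplus (A.mul x z) A.one), ant1,
      A.mul_comm]
    exact ant2
  have h1 := antitone A hL'
  rw [dne A] at h1
  have hv_y : A.mul (A.mul (A.mul (A.oplus (A.mul x y) A.one) (A.oplus (A.mul x z) A.one))
      (A.mul x (A.oplus (A.mul (A.oplus y A.one) (A.oplus z A.one)) A.one))) y
      = A.zero := by
    rw [ac7 A (A.oplus (A.mul x y) A.one) (A.oplus (A.mul x z) A.one) x
        (A.oplus (A.mul (A.oplus y A.one) (A.oplus z A.one)) A.one) y,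
      mul_compl_self A, A.mul_comm A.zero, A.mul_zero]
  have hv_z : A.mul (A.mul (A.mul (A.oplus (A.mul x y) A.one) (A.oplus (A.mul x z) A.one))
      (A.mul x (A.oplus (A.mul (A.oplus y A.one) (A.oplus z A.one)) A.one))) z
      = A.zero := by
    rw [ac8 A (A.oplus (A.mul x y) A.one) (A.oplus (A.mul x z) A.one) x
        (A.oplus (A.mul (A.oplus y A.one) (A.oplus z A.one)) A.one) z,
      mul_compl_self A, A.mul_comm A.zero, A.mul_zero]
  have hvY := elem A wa T (A.mul (A.mul (A.oplus (A.mul x y) A.one)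
      (A.oplus (A.mul x z) A.one))
      (A.mul x (A.oplus (A.mul (A.oplus y A.one) (A.oplus z A.one)) A.one))) y
  rw [hv_y, zero_compl A, A.mul_comm A.one, A.mul_one, dne A] at hvY
  have hvZ := elem A wa T (A.mul (A.mul (A.oplus (A.mul x y) A.one)
      (A.oplus (A.mul x z) A.one))
      (A.mul x (A.oplus (A.mul (A.oplus y A.one) (A.oplus z A.one)) A.one))) z
  rw [hv_z, zero_compl A, A.mul_comm A.one, A.mul_one, dne A] at hvZ
  have hvYZ : A.mul (A.mul (A.mul (A.oplus (A.mul x y) A.one) (A.oplus (A.mul x z) A.one))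
      (A.mul x (A.oplus (A.mul (A.oplus y A.one) (A.oplus z A.one)) A.one)))
      (A.mul (A.oplus y A.one) (A.oplus z A.one))
      = A.mul (A.mul (A.oplus (A.mul x y) A.one) (A.oplus (A.mul x z) A.one))
      (A.mul x (A.oplus (A.mul (A.oplus y A.one) (A.oplus z A.one)) A.one)) := by
    rw [← A.mul_assoc, hvY, hvZ]
  have hvJ := ac9 A (A.oplus (A.mul x y) A.one) (A.oplus (A.mul x z) A.one) x
    (A.oplus (A.mul (A.oplus y A.one) (A.oplus z A.one)) A.one)
  have hv0 : A.mul (A.mul (A.oplus (A.mul x y) A.one) (A.oplus (A.mul x z) A.one))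
      (A.mul x (A.oplus (A.mul (A.oplus y A.one) (A.oplus z A.one)) A.one)) = A.zero := by
    calc A.mul (A.mul (A.oplus (A.mul x y) A.one) (A.oplus (A.mul x z) A.one))
          (A.mul x (A.oplus (A.mul (A.oplus y A.one) (A.oplus z A.one)) A.one))
        = A.mul (A.mul (A.mul (A.mul (A.oplus (A.mul x y) A.one)
            (A.oplus (A.mul x z) A.one))
            (A.mul x (A.oplus (A.mul (A.oplus y A.one) (A.oplus z A.one)) A.one)))
            (A.mul (A.oplus y A.one) (A.oplus z A.one)))
            (A.oplus (A.mul (A.oplus y A.one) (A.oplus z A.one)) A.one) := by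
          rw [hvYZ, hvJ]
      _ = A.mul (A.mul (A.mul (A.oplus (A.mul x y) A.one) (A.oplus (A.mul x z) A.one))
            (A.mul x (A.oplus (A.mul (A.oplus y A.one) (A.oplus z A.one)) A.one)))
            (A.mul (A.mul (A.oplus y A.one) (A.oplus z A.one))
              (A.oplus (A.mul (A.oplus y A.one) (A.oplus z A.one)) A.one)) :=
          A.mul_assoc _ _ _
      _ = A.zero := by rw [mul_compl_self A, A.mul_zero]
  refine om A h1 ?_
  rw [dne A, A.mul_comm]
  rw [A.mul_comm] at hv0
  exact hv0

end WithWaT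

end RLSEAux

/-- In an RLSE satisfying weak associativity and identity (T), the induced
orthomodular lattice is a Boolean algebra: `c(x,y) = 1` for all `x, y`,
and the lattice is distributive. -/
theorem rlse_boolean_of_wa_T {R : Type*} (A : RLSE R)
    (wa : ∀ x y : R, A.oplus (A.oplus x y) A.one = A.oplus x (A.oplus y A.one))
    (T : ∀ x y : R,
      A.oplus
        (A.mul (A.oplus (A.mul x (A.oplus y A.one)) A.one)
               (A.oplus (A.mul (A.oplus x A.one) y) A.one)) A.one
      = A.oplus x y) :
    let compl : R → R := fun x => A.oplus x A.one
    let sup : R → R → R := fun x y => compl (A.mul (compl x) (compl y))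
    (∀ x y : R,
      sup (sup (sup (A.mul x y) (A.mul x (compl y))) (A.mul (compl x) y))
        (A.mul (compl x) (compl y)) = A.one) ∧
    (∀ x y z : R, A.mul x (sup y z) = sup (A.mul x y) (A.mul x z)) := by
  intro compl sup
  exact ⟨fun x y => RLSEAux.conj1 A wa T x y, fun x y z => RLSEAux.conj2 A wa T x y z⟩
end

section
/- Let L be an orthomodular lattice. Defining x⊕₁y := (x∧y')∨(x'∧y) and x·y := x∧y, the algebra (L,⊕₁,·,0,1) is an RLSE, i.e., satisfies identities (R1)–(R4). -/
/-- In any orthomodular lattice, `x ⊕₁ y := (x ⊓ y') ⊔ (x' ⊓ y)` together with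
`x · y := x ⊓ y` yields an RLSE, i.e. identities (R1)–(R4) hold
(with `0 = ⊥`, `1 = ⊤`). -/
theorem oml_oplus1_rlse {L : Type*} [Lattice L] [BoundedOrder L] (c : L → L)
    (compl_invol : ∀ x, c (c x) = x)
    (compl_antitone : ∀ x y : L, x ≤ y → c y ≤ c x)
    (inf_compl : ∀ x : L, x ⊓ c x = ⊥)
    (sup_compl : ∀ x : L, x ⊔ c x = ⊤)
    (oml : ∀ x y : L, x ≤ y → y = x ⊔ (y ⊓ c x)) :
    let op : L → L → L := fun x y => (x ⊓ c y) ⊔ (c x ⊓ y)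
    (∀ x y : L, op x y = op y x) ∧
    (∀ x y : L, op ((op (x ⊓ y) ⊤) ⊓ (op x ⊤)) ⊤ = x) ∧
    (∀ x y : L, (op ((op (x ⊓ y) ⊤) ⊓ x) ⊤) ⊓ x = x ⊓ y) ∧
    (∀ x y : L, op (x ⊓ y) (op x ⊤) = op ((op (x ⊓ y) ⊤) ⊓ x) ⊤) := by
  have cTop : c ⊤ = ⊥ := by
    have h := inf_compl ⊤; simpa using h
  intro op
  have hop_top : ∀ x, op x ⊤ = c x := by
    intro x; simp [op, cTop]
  -- antitone gives de Morgan
  have le_c_iff : ∀ u v : L, u ≤ c v ↔ v ≤ c u := by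
    intro u v
    constructor
    · intro h
      have := compl_antitone _ _ h
      rw [compl_invol] at this
      exact this
    · intro h
      have := compl_antitone _ _ h
      rw [compl_invol] at this
      exact this
  have deM : ∀ u v : L, c (u ⊓ v) = c u ⊔ c v := by
    intro u v
    have h : c (c u ⊔ c v) ≤ u ⊓ v := by
      refine le_inf ?_ ?_
      · calc c (c u ⊔ c v) ≤ c (c u) := compl_antitone _ _ le_sup_left
          _ = u := compl_invol u
      · calc c (c u ⊔ c v) ≤ c (c v) := compl_antitone _ _ le_sup_right
          _ = v := compl_invol v
    apply le_antisymm
    · calc c (u ⊓ v) ≤ c (c (c u ⊔ c v)) := compl_antitone _ _ h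
        _ = c u ⊔ c v := compl_invol _
    · exact sup_le (compl_antitone _ _ inf_le_left) (compl_antitone _ _ inf_le_right)
  -- Sasaki identity: for a ≤ x, x ⊓ c (x ⊓ c a) = a
  have sasaki : ∀ a x : L, a ≤ x → x ⊓ c (x ⊓ c a) = a := by
    intro a x hax
    set b := x ⊓ c a with hb
    set d := x ⊓ c b with hd
    have hdx : d ≤ x := inf_le_left
    have had : a ≤ d := by
      refine le_inf hax ?_
      rw [le_c_iff]
      exact inf_le_right
    have hda : d = a ⊔ (d ⊓ c a) := oml a d had
    have hdc : d ⊓ c a ≤ ⊥ := by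
      have h1 : d ⊓ c a ≤ b := le_inf (le_trans inf_le_left hdx) inf_le_right
      have h2 : d ⊓ c a ≤ c b := le_trans inf_le_left inf_le_right
      calc d ⊓ c a ≤ b ⊓ c b := le_inf h1 h2
        _ = ⊥ := inf_compl b
    have : d = a := by
      rw [hda, le_bot_iff.mp hdc, sup_bot_eq]
    exact this
  refine ⟨?_, ?_, ?_, ?_⟩
  · intro x y
    simp only [op]
    rw [sup_comm, inf_comm (c y) x, inf_comm (c x) y]
  · intro x y
    rw [hop_top, hop_top, hop_top]
    have h : c x ≤ c (x ⊓ y) := compl_antitone _ _ inf_le_left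
    rw [inf_eq_right.mpr h, compl_invol]
  · intro x y
    simp only [hop_top]
    rw [inf_comm (c (x ⊓ y)) x, inf_comm _ x]
    exact sasaki (x ⊓ y) x inf_le_left
  · intro x y
    simp only [hop_top]
    simp only [op]
    rw [compl_invol]
    have h1 : c x ≤ c (x ⊓ y) := compl_antitone _ _ inf_le_left
    rw [inf_eq_left.mpr (inf_le_left : x ⊓ y ≤ x), inf_eq_right.mpr h1,
      deM, compl_invol]
end

section
/- Let L be an orthomodular lattice. Defining x⊕₂y := (x∨y)∧(x'∨y') and x·y := x∧y, the algebra (L,⊕₂,·,0,1) is an RLSE, i.e., satisfies identities (R1)–(R4). -/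
/-- In any orthomodular lattice, `x ⊕₂ y := (x ⊔ y) ⊓ (x' ⊔ y')` together with
`x · y := x ⊓ y` yields an RLSE, i.e. identities (R1)–(R4) hold
(with `0 = ⊥`, `1 = ⊤`). -/
theorem oml_oplus2_rlse {L : Type*} [Lattice L] [BoundedOrder L] (c : L → L)
    (compl_invol : ∀ x, c (c x) = x)
    (compl_antitone : ∀ x y : L, x ≤ y → c y ≤ c x)
    (inf_compl : ∀ x : L, x ⊓ c x = ⊥)
    (sup_compl : ∀ x : L, x ⊔ c x = ⊤)
    (oml : ∀ x y : L, x ≤ y → y = x ⊔ (y ⊓ c x)) :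
    let op : L → L → L := fun x y => (x ⊔ y) ⊓ (c x ⊔ c y)
    (∀ x y : L, op x y = op y x) ∧
    (∀ x y : L, op ((op (x ⊓ y) ⊤) ⊓ (op x ⊤)) ⊤ = x) ∧
    (∀ x y : L, (op ((op (x ⊓ y) ⊤) ⊓ x) ⊤) ⊓ x = x ⊓ y) ∧
    (∀ x y : L, op (x ⊓ y) (op x ⊤) = op ((op (x ⊓ y) ⊤) ⊓ x) ⊤) := by
  intro op
  -- c ⊤ = ⊥
  have ctop : c ⊤ = ⊥ := by
    have := inf_compl ⊤
    simpa using this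
  -- op x ⊤ = c x
  have opTop : ∀ x : L, op x ⊤ = c x := by
    intro x
    simp [op, ctop]
  -- De Morgan: c (u ⊔ v) = c u ⊓ c v
  have dmSup : ∀ u v : L, c (u ⊔ v) = c u ⊓ c v := by
    intro u v
    apply le_antisymm
    · exact le_inf (compl_antitone _ _ le_sup_left) (compl_antitone _ _ le_sup_right)
    · have h1 : u ≤ c (c u ⊓ c v) := by
        have := compl_antitone _ _ (inf_le_left : c u ⊓ c v ≤ c u)
        simpa [compl_invol] using this
      have h2 : v ≤ c (c u ⊓ c v) := by
        have := compl_antitone _ _ (inf_le_right : c u ⊓ c v ≤ c v)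
        simpa [compl_invol] using this
      have := compl_antitone _ _ (sup_le h1 h2)
      simpa [compl_invol] using this
  -- De Morgan: c (u ⊓ v) = c u ⊔ c v
  have dmInf : ∀ u v : L, c (u ⊓ v) = c u ⊔ c v := by
    intro u v
    have := dmSup (c u) (c v)
    rw [compl_invol, compl_invol] at this
    rw [← this, compl_invol]
  -- dual OML: a ≤ x → x ⊓ (a ⊔ c x) = a
  have oml' : ∀ a x : L, a ≤ x → x ⊓ (a ⊔ c x) = a := by
    intro a x hax
    have h := oml (c x) (c a) (compl_antitone _ _ hax)
    have : c (c a) = c (c x ⊔ (c a ⊓ c (c x))) := by rw [← h]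
    simp only [compl_invol, dmSup, dmInf] at this
    exact this.symm
  refine ⟨?_, ?_, ?_, ?_⟩
  · intro x y
    simp only [op]
    rw [sup_comm x y, sup_comm (c x) (c y)]
  · intro x y
    simp only [opTop]
    have h : c x ≤ c (x ⊓ y) := compl_antitone _ _ inf_le_left
    rw [inf_eq_right.mpr h, compl_invol]
  · intro x y
    simp only [opTop]
    rw [dmInf, compl_invol]
    rw [inf_comm]
    exact oml' (x ⊓ y) x inf_le_left
  · intro x y
    simp only [opTop]
    rw [dmInf, compl_invol]
    simp only [op]
    have h : x ⊓ y ⊔ c x ≤ c (x ⊓ y) ⊔ c (c x) := by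
      rw [compl_invol]
      exact sup_le (le_trans inf_le_left le_sup_right)
        (le_trans (compl_antitone _ _ inf_le_left) le_sup_left)
    exact inf_eq_left.mpr h
end

section
/- In any orthomodular lattice, the terms t̂(x,y) := (x∧(x'∨y'))∨(y∧(x'∨y')) and t₂(x,y) := (x∨y)∧(x'∨y') coincide, i.e., t̂(x,y) = t₂(x,y) for all x,y. -/
/-- In any orthomodular lattice,
`(x ⊓ (x' ⊔ y')) ⊔ (y ⊓ (x' ⊔ y')) = (x ⊔ y) ⊓ (x' ⊔ y')`. -/
theorem oml_that_eq_t2 {L : Type*} [Lattice L] [BoundedOrder L] (c : L → L)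
    (compl_invol : ∀ x, c (c x) = x)
    (compl_antitone : ∀ x y : L, x ≤ y → c y ≤ c x)
    (inf_compl : ∀ x : L, x ⊓ c x = ⊥)
    (sup_compl : ∀ x : L, x ⊔ c x = ⊤)
    (oml : ∀ x y : L, x ≤ y → y = x ⊔ (y ⊓ c x)) :
    ∀ x y : L, (x ⊓ (c x ⊔ c y)) ⊔ (y ⊓ (c x ⊔ c y)) = (x ⊔ y) ⊓ (c x ⊔ c y) := by
  -- De Morgan laws from the antitone involution
  have dm_sup : ∀ p q : L, c (p ⊔ q) = c p ⊓ c q := by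
    intro p q
    apply le_antisymm
    · exact le_inf (compl_antitone _ _ le_sup_left) (compl_antitone _ _ le_sup_right)
    · have h : p ⊔ q ≤ c (c p ⊓ c q) := by
        apply sup_le
        · have := compl_antitone _ _ (inf_le_left (a := c p) (b := c q))
          rwa [compl_invol] at this
        · have := compl_antitone _ _ (inf_le_right (a := c p) (b := c q))
          rwa [compl_invol] at this
      have := compl_antitone _ _ h
      rwa [compl_invol] at this
  have dm_inf : ∀ p q : L, c (p ⊓ q) = c p ⊔ c q := by
    intro p q
    have := dm_sup (c p) (c q)
    rw [compl_invol, compl_invol] at this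
    rw [← this, compl_invol]
  have cinj : ∀ p q : L, c p = c q → p = q := by
    intro p q h
    have := congrArg c h
    rwa [compl_invol, compl_invol] at this
  -- key lemma: u ≤ a → (u ⊔ c a) ⊓ a = u
  have key : ∀ u a : L, u ≤ a → (u ⊔ c a) ⊓ a = u := by
    intro u a hu
    apply cinj
    rw [dm_inf, dm_sup, compl_invol]
    have h1 : c a ≤ c u := compl_antitone _ _ hu
    have h2 := oml (c a) (c u) h1
    rw [compl_invol] at h2
    rw [sup_comm, ← h2]
  intro x y
  set a := c x ⊔ c y with ha
  have hca : c a = x ⊓ y := by rw [ha, dm_sup, compl_invol, compl_invol]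
  have hx : x = (x ⊓ y) ⊔ (x ⊓ a) := by
    have := oml (x ⊓ y) x inf_le_left
    rwa [dm_inf] at this
  have hy : y = (x ⊓ y) ⊔ (y ⊓ a) := by
    have := oml (x ⊓ y) y inf_le_right
    rwa [dm_inf] at this
  have hsup : x ⊔ y = ((x ⊓ a) ⊔ (y ⊓ a)) ⊔ c a := by
    calc x ⊔ y = ((x ⊓ y) ⊔ (x ⊓ a)) ⊔ ((x ⊓ y) ⊔ (y ⊓ a)) := by rw [← hx, ← hy]
      _ = ((x ⊓ a) ⊔ (y ⊓ a)) ⊔ (x ⊓ y) := by ac_rfl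
      _ = ((x ⊓ a) ⊔ (y ⊓ a)) ⊔ c a := by rw [hca]
  rw [hsup, key ((x ⊓ a) ⊔ (y ⊓ a)) a (sup_le inf_le_right inf_le_right)]
end

section
/- An orthomodular lattice L satisfies (x∧y')∨(x'∧y) = (x∨y)∧(x'∨y') for all x,y if and only if L is a Boolean algebra (i.e., distributive). -/
/-- An orthomodular lattice satisfies `(x ⊓ y') ⊔ (x' ⊓ y) = (x ⊔ y) ⊓ (x' ⊔ y')`
for all `x, y` iff it is a Boolean algebra, i.e. distributive. -/
theorem oml_t1_eq_t2_iff_boolean {L : Type*} [Lattice L] [BoundedOrder L] (c : L → L)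
    (compl_invol : ∀ x, c (c x) = x)
    (compl_antitone : ∀ x y : L, x ≤ y → c y ≤ c x)
    (inf_compl : ∀ x : L, x ⊓ c x = ⊥)
    (sup_compl : ∀ x : L, x ⊔ c x = ⊤)
    (oml : ∀ x y : L, x ≤ y → y = x ⊔ (y ⊓ c x)) :
    (∀ x y : L, (x ⊓ c y) ⊔ (c x ⊓ y) = (x ⊔ y) ⊓ (c x ⊔ c y)) ↔
    (∀ x y z : L, x ⊓ (y ⊔ z) = (x ⊓ y) ⊔ (x ⊓ z)) := by
  -- De Morgan laws
  have dm_sup : ∀ a b : L, c (a ⊔ b) = c a ⊓ c b := by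
    intro a b
    apply le_antisymm
    · exact le_inf (compl_antitone _ _ le_sup_left) (compl_antitone _ _ le_sup_right)
    · have h1 : a ≤ c (c a ⊓ c b) := by
        have := compl_antitone _ _ (inf_le_left : c a ⊓ c b ≤ c a)
        rwa [compl_invol] at this
      have h2 : b ≤ c (c a ⊓ c b) := by
        have := compl_antitone _ _ (inf_le_right : c a ⊓ c b ≤ c b)
        rwa [compl_invol] at this
      have := compl_antitone _ _ (sup_le h1 h2)
      rwa [compl_invol] at this
  have dm_inf : ∀ a b : L, c (a ⊓ b) = c a ⊔ c b := by
    intro a b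
    have := dm_sup (c a) (c b)
    rw [compl_invol, compl_invol] at this
    rw [← this, compl_invol]
  -- sandwich lemma: if u ≤ p ≤ u ⊔ v and p ≤ c v, then p = u
  have sandwich : ∀ u v p : L, u ≤ p → p ≤ u ⊔ v → p ≤ c v → p = u := by
    intro u v p hup hpuv hpcv
    have hb : p ⊓ c u = ⊥ := by
      apply le_bot_iff.mp
      have h1 : p ⊓ c u ≤ (u ⊔ v) ⊓ c (u ⊔ v) := by
        rw [dm_sup]
        exact le_inf (le_trans inf_le_left hpuv)
          (le_inf inf_le_right (le_trans inf_le_left hpcv))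
      rw [inf_compl] at h1
      exact h1
    have := oml u p hup
    rw [hb, sup_bot_eq] at this
    exact this
  constructor
  · intro h x y z
    -- commutativity: ∀ a b, a = (a ⊓ b) ⊔ (a ⊓ c b)
    have comm : ∀ a b : L, a = (a ⊓ b) ⊔ (a ⊓ c b) := by
      intro a b
      set t := (a ⊓ b) ⊔ (a ⊓ c b) with ht
      set q := (c a ⊓ b) ⊔ (c a ⊓ c b) with hq
      have hs := h a b
      have htop : t ⊔ q = ⊤ := by
        have hcs : c ((a ⊓ c b) ⊔ (c a ⊓ b)) = (c a ⊔ b) ⊓ (a ⊔ c b) := by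
          rw [dm_sup, dm_inf, dm_inf, compl_invol, compl_invol]
        have hcs2 : c ((a ⊔ b) ⊓ (c a ⊔ c b)) = (c a ⊓ c b) ⊔ (a ⊓ b) := by
          rw [dm_inf, dm_sup, dm_sup, compl_invol, compl_invol]
        have hcseq : (c a ⊔ b) ⊓ (a ⊔ c b) = (c a ⊓ c b) ⊔ (a ⊓ b) := by
          rw [← hcs, ← hcs2, hs]
        have hsc := sup_compl ((a ⊓ c b) ⊔ (c a ⊓ b))
        rw [hcs, hcseq] at hsc
        calc t ⊔ q = ((a ⊓ c b) ⊔ (c a ⊓ b)) ⊔ ((c a ⊓ c b) ⊔ (a ⊓ b)) := by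
              rw [ht, hq]; ac_rfl
          _ = ⊤ := hsc
      -- q ≤ c a and q ≤ c t
      have hqa : q ≤ c a := sup_le inf_le_left inf_le_left
      have hqt : q ≤ c t := by
        rw [ht, dm_sup]
        apply le_inf
        · rw [dm_inf]
          exact le_trans hqa le_sup_left
        · rw [dm_inf]
          exact le_trans hqa le_sup_left
      have hta : t ≤ a := sup_le inf_le_left inf_le_left
      have ctop : c (⊤ : L) = ⊥ := by
        have := inf_compl (⊤ : L)
        rwa [top_inf_eq] at this
      have hact : a ⊓ c t = ⊥ := by
        apply le_bot_iff.mp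
        have hacq : a ≤ c q := by
          have := compl_antitone _ _ hqa
          rwa [compl_invol] at this
        have h1 : a ⊓ c t ≤ c t ⊓ c q :=
          le_inf inf_le_right (le_trans inf_le_left hacq)
        have h2 : c t ⊓ c q = c (t ⊔ q) := (dm_sup t q).symm
        rw [h2, htop, ctop] at h1
        exact h1
      have := oml t a hta
      rw [hact, sup_bot_eq] at this
      exact this
    -- L1 : a ⊓ (c a ⊔ c b) = a ⊓ c b
    have L1 : ∀ a b : L, a ⊓ (c a ⊔ c b) = a ⊓ c b := by
      intro a b
      apply sandwich (a ⊓ c b) (a ⊓ b) (a ⊓ (c a ⊔ c b))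
      · exact le_inf inf_le_left (le_trans inf_le_right le_sup_right)
      · exact le_trans inf_le_left (le_of_eq ((comm a b).trans (sup_comm _ _)))
      · rw [dm_inf]
        exact inf_le_right
    -- now distributivity
    set w := (x ⊓ y) ⊔ (x ⊓ z) with hw
    have hwle : w ≤ x ⊓ (y ⊔ z) :=
      sup_le (le_inf inf_le_left (le_trans inf_le_right le_sup_left))
        (le_inf inf_le_left (le_trans inf_le_right le_sup_right))
    have hxcw : x ⊓ c w = x ⊓ (c y ⊓ c z) := by
      have hcw : c w = (c x ⊔ c y) ⊓ (c x ⊔ c z) := by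
        rw [hw, dm_sup, dm_inf, dm_inf]
      calc x ⊓ c w = (x ⊓ (c x ⊔ c y)) ⊓ (c x ⊔ c z) := by rw [hcw, inf_assoc]
        _ = (x ⊓ c y) ⊓ (c x ⊔ c z) := by rw [L1]
        _ = (x ⊓ (c x ⊔ c z)) ⊓ c y := by ac_rfl
        _ = (x ⊓ c z) ⊓ c y := by rw [L1]
        _ = x ⊓ (c y ⊓ c z) := by ac_rfl
    have hfin : (x ⊓ (y ⊔ z)) ⊓ c w = ⊥ := by
      apply le_bot_iff.mp
      have h1 : (x ⊓ (y ⊔ z)) ⊓ c w ≤ (y ⊔ z) ⊓ c (y ⊔ z) := by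
        apply le_inf (le_trans inf_le_left inf_le_right)
        have h2 : (x ⊓ (y ⊔ z)) ⊓ c w ≤ x ⊓ c w :=
          le_inf (le_trans inf_le_left inf_le_left) inf_le_right
        rw [hxcw] at h2
        rw [dm_sup y z]
        exact le_trans h2 inf_le_right
      rw [inf_compl] at h1
      exact h1
    have := oml w (x ⊓ (y ⊔ z)) hwle
    rw [hfin, sup_bot_eq] at this
    exact this
  · intro hd x y
    have h1 : (x ⊔ y) ⊓ (c x ⊔ c y) = ((x ⊔ y) ⊓ c x) ⊔ ((x ⊔ y) ⊓ c y) := hd _ _ _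
    have h2 : c x ⊓ (x ⊔ y) = (c x ⊓ x) ⊔ (c x ⊓ y) := hd _ _ _
    have h3 : c y ⊓ (x ⊔ y) = (c y ⊓ x) ⊔ (c y ⊓ y) := hd _ _ _
    rw [inf_comm (c x) x, inf_compl, bot_sup_eq] at h2
    rw [inf_comm (c y) y, inf_compl, sup_bot_eq] at h3
    rw [h1, inf_comm (x ⊔ y) (c x), inf_comm (x ⊔ y) (c y), h2, h3]
    rw [inf_comm (c y) x, inf_comm (c x) y]
    exact sup_comm _ _
end

section
/- Let R be an RLSE satisfying the additional identity (R5): x⊕y = x·(y⊕1) ⊕ (x⊕1)·y. Then ⊕ is determined by the induced lattice operations: x⊕y = (x∧y')∨(x'∧y) for all x,y, where x':=x⊕1, x∧y:=xy, x∨y:=(x'y')'. -/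
/-- In an RLSE satisfying (R5): `x ⊕ y = x·y' ⊕ x'·y`, the operation ⊕ is
determined by the lattice operations: `x ⊕ y = (x ∧ y') ∨ (x' ∧ y)`,
where `x' = x ⊕ 1`, `x ∧ y = x·y`, `x ∨ y = (x'·y')'`. -/
theorem rlse_R5_oplus_eq {R : Type*} (A : RLSE R)
    (R5 : ∀ x y : R, A.oplus x y =
      A.oplus (A.mul x (A.oplus y A.one)) (A.mul (A.oplus x A.one) y)) :
    ∀ x y : R,
      A.oplus x y =
        A.oplus
          (A.mul (A.oplus (A.mul x (A.oplus y A.one)) A.one)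
                 (A.oplus (A.mul (A.oplus x A.one) y) A.one)) A.one := by
  -- notation: x' := x ⊕ 1
  have dneg : ∀ x, A.oplus (A.oplus x A.one) A.one = x := by
    intro x
    have h := A.R2 x A.one
    rwa [A.mul_one, A.mul_idem] at h
  -- (x'y)' · x = x
  have key : ∀ x y, A.mul (A.oplus (A.mul (A.oplus x A.one) y) A.one) x = x := by
    intro x y
    have h := A.R2 (A.oplus x A.one) y
    rw [dneg x] at h
    -- h : ((x'y)' · x)' = x'
    have h2 := congrArg (fun z => A.oplus z A.one) h
    rwa [dneg, dneg] at h2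
  intro x y
  set u := A.mul x (A.oplus y A.one) with hu
  set v := A.mul (A.oplus x A.one) y with hv
  -- v' · u = u
  have hvu : A.mul (A.oplus v A.one) u = u := by
    rw [hu, hv, ← A.mul_assoc, key x y]
  have h4 := A.R4 (A.oplus v A.one) u
  rw [hvu, dneg v] at h4
  -- h4 : u ⊕ v = (u' · v')'  (after fixing mul order)
  rw [R5 x y, ← hu, ← hv, h4]
end

section
/- Every Boolean ring (R,+,·,0,1) is an RLSE: with ⊕ := + the identities (R1)–(R4) hold, where (R,·,1) is an idempotent commutative monoid with zero element 0. -/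
/-- Every Boolean ring (with `⊕ = +`, `· = *`) is an RLSE: the multiplicative
monoid is idempotent and commutative with zero element `0`, and (R1)–(R4) hold. -/
theorem boolean_ring_is_rlse {R : Type*} [BooleanRing R] :
    (∀ x y : R, x * y = y * x) ∧
    (∀ x y z : R, (x * y) * z = x * (y * z)) ∧
    (∀ x : R, x * 1 = x) ∧
    (∀ x : R, x * x = x) ∧
    (∀ x : R, x * 0 = 0) ∧
    (∀ x y : R, x + y = y + x) ∧
    (∀ x y : R, (x * y + 1) * (x + 1) + 1 = x) ∧
    (∀ x y : R, ((x * y + 1) * x + 1) * x = x * y) ∧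
    (∀ x y : R, x * y + (x + 1) = (x * y + 1) * x + 1) := by
  have ms : ∀ a : R, a * a = a := BooleanRing.mul_self
  have p2 : ∀ a : R, a ^ 2 = a := fun a => by rw [sq, ms]
  have p3 : ∀ a : R, a ^ 3 = a := fun a => by rw [pow_succ, p2, ms]
  have as : ∀ a : R, a + a = 0 := fun a => BooleanRing.add_self a
  refine ⟨fun x y => mul_comm x y, fun x y z => mul_assoc x y z, fun x => mul_one x,
    fun x => ms x, fun x => mul_zero x, fun x y => add_comm x y, ?_, ?_, ?_⟩
  have h2 : (2 : R) = 0 := by rw [show (2:R) = 1 + 1 by norm_num, as]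
  · intro x y
    ring_nf
    rw [p2, h2, show 0 + x + x * y + x * y = x + (x * y + x * y) by ring, as, add_zero]
  · intro x y
    ring_nf
    rw [p2, p3, as, zero_add]
  · intro x y
    ring_nf
    rw [p2]
end
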